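/- arXiv:2405.16195 — 2 statements merged into one kernel-verified Lean document; each statement's English description precedes it below -/
import Mathlib

section
/- Let Q : S × A → ℝ be a function over a finite MDP, π a greedy policy with respect to Q (i.e., π(s) ∈ argmax_a Q(s,a) for all s), and Q* the optimal action-value function. Then ‖Q* − Q^π‖_∞ ≤ (2γ/(1−γ)) ‖Q* − Q‖_∞, where Q^π is the action-value function of π. -/
open Finset

/-- Performance loss of the greedy policy: `‖Q* − Q^π‖_∞ ≤ (2γ/(1−γ)) ‖Q* − Q‖_∞`
for a policy `π` greedy w.r.t. `Q`. -/
theorem greedy_policy_performance_loss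
    {S A : Type*} [Fintype S] [Fintype A] [Nonempty S] [Nonempty A]
    (P : S → A → S → ℝ) (r : S → A → ℝ) (γ : ℝ)
    (hγ0 : 0 ≤ γ) (hγ1 : γ < 1)
    (hP0 : ∀ s a s', 0 ≤ P s a s') (hP1 : ∀ s a, ∑ s', P s a s' = 1)
    (Tstar : (S × A → ℝ) → S × A → ℝ)
    (hTstar : ∀ Q : S × A → ℝ, ∀ s a,
      Tstar Q (s, a) = r s a + γ * ∑ s', P s a s' * ⨆ a' : A, Q (s', a'))
    (Q : S × A → ℝ) (π : S → A)
    (hgreedy : ∀ s a, Q (s, a) ≤ Q (s, π s))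
    (Tpi : (S × A → ℝ) → S × A → ℝ)
    (hTpi : ∀ Qf : S × A → ℝ, ∀ s a,
      Tpi Qf (s, a) = r s a + γ * ∑ s', P s a s' * Qf (s', π s'))
    (Qstar Qpi : S × A → ℝ)
    (hQstar : Tstar Qstar = Qstar) (hQpi : Tpi Qpi = Qpi) :
    (⨆ p : S × A, |Qstar p - Qpi p|)
      ≤ (2 * γ / (1 - γ)) * ⨆ p : S × A, |Qstar p - Q p| := by
  have hB : ∀ f : S × A → ℝ, BddAbove (Set.range f) := fun f =>
    Set.Finite.bddAbove (Set.finite_range f)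
  have hεle : ∀ p, |Qstar p - Q p| ≤ ⨆ p : S × A, |Qstar p - Q p| := fun p =>
    le_ciSup (f := fun p : S × A => |Qstar p - Q p|) (hB _) p
  have hDle : ∀ p, |Qstar p - Qpi p| ≤ ⨆ p : S × A, |Qstar p - Qpi p| := fun p =>
    le_ciSup (f := fun p : S × A => |Qstar p - Qpi p|) (hB _) p
  set ε := ⨆ p : S × A, |Qstar p - Q p| with hεdef
  set D := ⨆ p : S × A, |Qstar p - Qpi p| with hDdef
  have hε0 : 0 ≤ ε := le_trans (abs_nonneg _) (hεle (Classical.arbitrary _))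
  have h1γ : 0 < 1 - γ := by linarith
  have key : ∀ s', |(⨆ a' : A, Qstar (s', a')) - Qpi (s', π s')| ≤ 2 * ε + D := by
    intro s'
    have hM1 : Qstar (s', π s') ≤ ⨆ a' : A, Qstar (s', a') :=
      le_ciSup (f := fun a' : A => Qstar (s', a')) (Set.Finite.bddAbove (Set.finite_range _)) (π s')
    have hM2 : (⨆ a' : A, Qstar (s', a')) ≤ Qstar (s', π s') + 2 * ε := by
      apply ciSup_le
      intro a'
      have h1 := abs_le.mp (hεle (s', a'))
      have h2 := hgreedy s' a'
      have h3 := abs_le.mp (hεle (s', π s'))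
      linarith [h1.2, h3.1]
    have h4 := abs_le.mp (hDle (s', π s'))
    rw [abs_le]
    constructor <;> linarith [h4.1, h4.2]
  have main : ∀ p : S × A, |Qstar p - Qpi p| ≤ γ * (2 * ε + D) := by
    rintro ⟨s, a⟩
    have e1 : Qstar (s, a) = r s a + γ * ∑ s', P s a s' * ⨆ a' : A, Qstar (s', a') := by
      conv_lhs => rw [← hQstar]
      exact hTstar Qstar s a
    have e2 : Qpi (s, a) = r s a + γ * ∑ s', P s a s' * Qpi (s', π s') := by
      conv_lhs => rw [← hQpi]
      exact hTpi Qpi s a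
    have hsum : ∑ s', P s a s' * ((⨆ a' : A, Qstar (s', a')) - Qpi (s', π s'))
        = (∑ s', P s a s' * ⨆ a' : A, Qstar (s', a')) - ∑ s', P s a s' * Qpi (s', π s') := by
      rw [← Finset.sum_sub_distrib]
      exact Finset.sum_congr rfl fun x _ => mul_sub _ _ _
    have hdiff : Qstar (s, a) - Qpi (s, a)
        = γ * ∑ s', P s a s' * ((⨆ a' : A, Qstar (s', a')) - Qpi (s', π s')) := by
      rw [e1, e2, hsum]; ring
    rw [hdiff, abs_mul, abs_of_nonneg hγ0]
    apply mul_le_mul_of_nonneg_left _ hγ0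
    calc |∑ s', P s a s' * ((⨆ a' : A, Qstar (s', a')) - Qpi (s', π s'))|
        ≤ ∑ s', |P s a s' * ((⨆ a' : A, Qstar (s', a')) - Qpi (s', π s'))| :=
          Finset.abs_sum_le_sum_abs _ _
      _ ≤ ∑ s', P s a s' * (2 * ε + D) := by
          apply Finset.sum_le_sum
          intro s' _
          rw [abs_mul, abs_of_nonneg (hP0 s a s')]
          exact mul_le_mul_of_nonneg_left (key s') (hP0 s a s')
      _ = 2 * ε + D := by rw [← Finset.sum_mul, hP1 s a, one_mul]
  have hDbound : D ≤ γ * (2 * ε + D) := ciSup_le main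
  rw [div_mul_eq_mul_div, le_div_iff₀ h1γ]
  nlinarith [hDbound]
end

section
/- Let (Q_i)_{i=0}^N be a sequence of functions S × A → ℝ over a finite MDP with ‖Γ*Q_{i−1} − Q_i‖_∞ ≤ ε for all i = 1,...,N. Then ‖Q* − Q_N‖_∞ ≤ ε/(1−γ) + γᴺ ‖Q* − Q₀‖_∞. -/
/-!
The sup-norm error `dᵢ = ‖Q* − Qᵢ‖_∞` obeys `dᵢ₊₁ ≤ γ dᵢ + ε`: insert `Γ*Qᵢ` between `Q* = Γ*Q*`
and `Qᵢ₊₁`, and use that `Γ*` is a `γ`-contraction (a maximum over actions is 1-Lipschitz and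
averaging against a transition probability does not increase the sup norm). Unrolling the
recursion gives `d_N ≤ γᴺ d₀ + ε ∑_{i<N} γⁱ ≤ γᴺ d₀ + ε / (1 − γ)`.
-/

open Finset NNReal

lemma iSup_abs_sub_eq_dist {ι : Type*} [Fintype ι] (f g : ι → ℝ) :
    ⨆ i, |f i - g i| = dist f g := by
  refine le_antisymm (Real.iSup_le (fun i => ?_) dist_nonneg) ?_
  · rw [← Real.dist_eq]; exact dist_le_pi_dist f g i
  · refine (dist_pi_le_iff (Real.iSup_nonneg fun i => abs_nonneg _)).2 fun i => ?_
    rw [Real.dist_eq]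
    exact le_ciSup (Set.finite_range fun i => |f i - g i|).bddAbove i

lemma abs_ciSup_sub_ciSup_le_dist {ι : Type*} [Fintype ι] (f g : ι → ℝ) :
    |(⨆ i, f i) - ⨆ i, g i| ≤ dist f g := by
  cases isEmpty_or_nonempty ι
  · simp [Real.iSup_of_isEmpty]
  have ciSup_le_add_dist : ∀ f g : ι → ℝ, ⨆ i, f i ≤ (⨆ i, g i) + dist f g := fun f g =>
    ciSup_le fun i => by
      have hfg : f i - g i ≤ dist f g :=
        (le_abs_self _).trans ((Real.dist_eq _ _).symm.trans_le (dist_le_pi_dist f g i))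
      have hg : g i ≤ ⨆ i, g i := le_ciSup (Set.finite_range g).bddAbove i
      linarith
  rw [abs_sub_le_iff]
  constructor <;> linarith [ciSup_le_add_dist f g, ciSup_le_add_dist g f, dist_comm f g]

lemma abs_sum_mul_le_of_sum_eq_one {ι : Type*} [Fintype ι] {p x : ι → ℝ} {M : ℝ}
    (hp0 : ∀ i, 0 ≤ p i) (hp1 : ∑ i, p i = 1) (hx : ∀ i, |x i| ≤ M) :
    |∑ i, p i * x i| ≤ M :=
  calc |∑ i, p i * x i| ≤ ∑ i, p i * |x i| := by
        simpa only [abs_mul, abs_of_nonneg (hp0 _)] using abs_sum_le_sum_abs (fun i => p i * x i) univ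
    _ ≤ ∑ i, p i * M := sum_le_sum fun i _ => mul_le_mul_of_nonneg_left (hx i) (hp0 i)
    _ = M := by rw [← sum_mul, hp1, one_mul]

theorem dist_bellman_le {S A : Type*} [Fintype S] [Fintype A]
    {P : S → A → S → ℝ} {r : S → A → ℝ} {γ : ℝ} (hγ0 : 0 ≤ γ)
    (hP0 : ∀ s a s', 0 ≤ P s a s') (hP1 : ∀ s a, ∑ s', P s a s' = 1)
    {T : (S × A → ℝ) → S × A → ℝ}
    (hT : ∀ Q : S × A → ℝ, ∀ s a,
      T Q (s, a) = r s a + γ * ∑ s', P s a s' * ⨆ a' : A, Q (s', a'))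
    (f g : S × A → ℝ) : dist (T f) (T g) ≤ γ * dist f g := by
  refine (dist_pi_le_iff (mul_nonneg hγ0 dist_nonneg)).2 ?_
  rintro ⟨s, a⟩
  have hV : ∀ s', |(⨆ a', f (s', a')) - ⨆ a', g (s', a')| ≤ dist f g := fun s' =>
    (abs_ciSup_sub_ciSup_le_dist _ _).trans
      ((dist_pi_le_iff dist_nonneg).2 fun a' => dist_le_pi_dist f g (s', a'))
  calc dist (T f (s, a)) (T g (s, a))
      = γ * |∑ s', P s a s' * ((⨆ a', f (s', a')) - ⨆ a', g (s', a'))| := by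
        rw [Real.dist_eq, hT, hT, ← abs_of_nonneg hγ0, ← abs_mul, abs_of_nonneg hγ0]
        simp only [mul_sub, sum_sub_distrib]
        ring_nf
    _ ≤ γ * dist f g := by gcongr; exact abs_sum_mul_le_of_sum_eq_one (hP0 s a) (hP1 s a) hV

theorem dist_fixedPoint_le_of_approx_iterate {X : Type*} [PseudoMetricSpace X]
    {T : X → X} {K : ℝ≥0} (hT : LipschitzWith K T) (hK : K < 1) {xstar : X}
    (hfix : T xstar = xstar) {N : ℕ} {x : ℕ → X} {ε : ℝ} (hε : 0 ≤ ε)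
    (herr : ∀ i < N, dist (T (x i)) (x (i + 1)) ≤ ε) :
    dist xstar (x N) ≤ ε / (1 - K) + K ^ N * dist xstar (x 0) := by
  have hK' : (K : ℝ) < 1 := hK
  induction N with
  | zero => simp only [pow_zero, one_mul, le_add_iff_nonneg_left]; exact div_nonneg hε (by linarith)
  | succ n ih =>
    have hd := ih fun i hi => herr i (Nat.lt_succ_of_lt hi)
    calc dist xstar (x (n + 1)) ≤ dist (T xstar) (T (x n)) + dist (T (x n)) (x (n + 1)) := by
          rw [hfix]; exact dist_triangle _ _ _
      _ ≤ K * (ε / (1 - K) + K ^ n * dist xstar (x 0)) + ε := by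
          gcongr
          · exact (hT.dist_le_mul _ _).trans (by gcongr)
          · exact herr n n.lt_succ_self
      _ = ε / (1 - K) + K ^ (n + 1) * dist xstar (x 0) := by
          field_simp [(by linarith : (1 : ℝ) - K ≠ 0)]
          ring

theorem avi_error_propagation_uniform_general
    {S A : Type*} [Fintype S] [Fintype A]
    (P : S → A → S → ℝ) (r : S → A → ℝ) (γ : ℝ)
    (hγ0 : 0 ≤ γ) (hγ1 : γ < 1)
    (hP0 : ∀ s a s', 0 ≤ P s a s') (hP1 : ∀ s a, ∑ s', P s a s' = 1)
    (T : (S × A → ℝ) → S × A → ℝ)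
    (hT : ∀ Q : S × A → ℝ, ∀ s a,
      T Q (s, a) = r s a + γ * ∑ s', P s a s' * ⨆ a' : A, Q (s', a'))
    (Qstar : S × A → ℝ) (hQstar : T Qstar = Qstar)
    (N : ℕ) (Q : ℕ → S × A → ℝ) (ε : ℝ) (hε : 0 ≤ ε)
    (herr : ∀ i < N, (⨆ p : S × A, |T (Q i) p - Q (i + 1) p|) ≤ ε) :
    (⨆ p : S × A, |Qstar p - Q N p|)
      ≤ ε / (1 - γ) + γ ^ N * ⨆ p : S × A, |Qstar p - Q 0 p| := by
  simp only [iSup_abs_sub_eq_dist] at herr ⊢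
  have hγ : (γ.toNNReal : ℝ) = γ := Real.coe_toNNReal γ hγ0
  have hLip : LipschitzWith γ.toNNReal T := LipschitzWith.of_dist_le_mul fun f g => by
    rw [hγ]; exact dist_bellman_le hγ0 hP0 hP1 hT f g
  have hK : γ.toNNReal < 1 := by rwa [← NNReal.coe_lt_coe, hγ, NNReal.coe_one]
  simpa only [hγ] using dist_fixedPoint_le_of_approx_iterate hLip hK hQstar hε herr

/-- Error propagation for approximate value iteration: uniform per-iteration
approximation error `ε` yields `‖Q* − Q_N‖_∞ ≤ ε/(1−γ) + γ^N ‖Q* − Q₀‖_∞`. -/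
theorem avi_error_propagation_uniform
    {S A : Type*} [Fintype S] [Fintype A] [Nonempty S] [Nonempty A]
    (P : S → A → S → ℝ) (r : S → A → ℝ) (γ : ℝ)
    (hγ0 : 0 ≤ γ) (hγ1 : γ < 1)
    (hP0 : ∀ s a s', 0 ≤ P s a s') (hP1 : ∀ s a, ∑ s', P s a s' = 1)
    (T : (S × A → ℝ) → S × A → ℝ)
    (hT : ∀ Q : S × A → ℝ, ∀ s a,
      T Q (s, a) = r s a + γ * ∑ s', P s a s' * ⨆ a' : A, Q (s', a'))
    (Qstar : S × A → ℝ) (hQstar : T Qstar = Qstar)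
    (N : ℕ) (Q : ℕ → S × A → ℝ) (ε : ℝ) (hε : 0 ≤ ε)
    (herr : ∀ i < N, (⨆ p : S × A, |T (Q i) p - Q (i + 1) p|) ≤ ε) :
    (⨆ p : S × A, |Qstar p - Q N p|)
      ≤ ε / (1 - γ) + γ ^ N * ⨆ p : S × A, |Qstar p - Q 0 p| :=
  avi_error_propagation_uniform_general P r γ hγ0 hγ1 hP0 hP1 T hT Qstar hQstar N Q ε hε herr
end
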